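/- arXiv:1703.09897 — 5 statements merged into one kernel-verified Lean document; each statement's English description precedes it below -/
import Mathlib

section
/- Let λ ≠ 0. Define the 2×2 matrices A(u, v) = [[−v, −1], [u v + 1/λ, u]] and B(u, v) = [[−v, −1], [u v + 1/λ − 1, u]]. For real numbers u, u₁₀, u₀₁, u₁₁ with u₁₀ ≠ u₀₁, the discrete zero-curvature condition A(u₀₁, u₁₁) · B(u, u₀₁) = B(u₁₀, u₁₁) · A(u, u₁₀) holds if and only if u₁₁ = u + 1/(u₁₀ − u₀₁). -/
/-- The `n`-shift Lax matrix of the discrete KdV equation. -/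
noncomputable def laxA (lam : ℝ) (u v : ℝ) : Matrix (Fin 2) (Fin 2) ℝ :=
  !![-v, -1; u * v + 1 / lam, u]

/-- The `m`-shift Lax matrix of the discrete KdV equation. -/
noncomputable def laxB (lam : ℝ) (u v : ℝ) : Matrix (Fin 2) (Fin 2) ℝ :=
  !![-v, -1; u * v + 1 / lam - 1, u]

/-! The spectral parameter cancels from the curvature `A(u₀₁,u₁₁) B(u,u₀₁) - B(u₁₀,u₁₁) A(u,u₁₀)`,
which is the scalar `(u₁₀ - u₀₁)(u₁₁ - u) - 1` times a nonzero matrix, so it vanishes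
exactly when the discrete KdV equation holds. -/

theorem laxA_mul_laxB_sub_laxB_mul_laxA (lam u u10 u01 u11 : ℝ) :
    laxA lam u01 u11 * laxB lam u u01 - laxB lam u10 u11 * laxA lam u u10 =
      ((u10 - u01) * (u11 - u) - 1) • !![-1, 0; u10 + u01, 1] := by
  ext i j
  fin_cases i <;> fin_cases j <;>
    simp [laxA, laxB] <;> ring

theorem laxA_mul_laxB_eq_laxB_mul_laxA_iff (lam u u10 u01 u11 : ℝ) :
    laxA lam u01 u11 * laxB lam u u01 = laxB lam u10 u11 * laxA lam u u10 ↔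
      (u10 - u01) * (u11 - u) = 1 := by
  have hM : !![(-1 : ℝ), 0; u10 + u01, 1] ≠ 0 := fun h0 => by
    simpa using congr_fun (congr_fun h0 1) 1
  rw [← sub_eq_zero, laxA_mul_laxB_sub_laxB_mul_laxA, smul_eq_zero_iff_left hM, sub_eq_zero]

theorem discrete_KdV_zero_curvature_general
    (lam : ℝ)
    (u u10 u01 u11 : ℝ) (h : u10 ≠ u01) :
    laxA lam u01 u11 * laxB lam u u01 = laxB lam u10 u11 * laxA lam u u10
      ↔ u11 = u + 1 / (u10 - u01) := by
  rw [laxA_mul_laxB_eq_laxB_mul_laxA_iff, ← sub_eq_iff_eq_add', eq_div_iff (sub_ne_zero.mpr h),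
    mul_comm]

/-- The discrete zero-curvature condition `A(u₀₁,u₁₁) B(u,u₀₁) = B(u₁₀,u₁₁) A(u,u₁₀)`
holds iff `u₁₁ = u + 1/(u₁₀ − u₀₁)`, i.e. iff `u` satisfies the discrete KdV equation. -/
theorem discrete_KdV_zero_curvature
    (lam : ℝ) (hlam : lam ≠ 0)
    (u u10 u01 u11 : ℝ) (h : u10 ≠ u01) :
    laxA lam u01 u11 * laxB lam u u01 = laxB lam u10 u11 * laxA lam u u10
      ↔ u11 = u + 1 / (u10 - u01) :=
  discrete_KdV_zero_curvature_general lam u u10 u01 u11 h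
end

section
/- Let u : ℤ × ℤ → ℝ satisfy u_{n+1,m+1} = u_{n,m} + 1/(u_{n+1,m} − u_{n,m+1}) for all n,m (assuming u_{n+1,m} ≠ u_{n,m+1} throughout). Then the function U_{n,m} := 1/(u_{n+1,m} − u_{n−1,m}) (assuming u_{n+1,m} ≠ u_{n−1,m} throughout) satisfies the linearized discrete equation U_{n+1,m+1} = U_{n,m} − (U_{n+1,m} − U_{n,m+1})/(u_{n+1,m} − u_{n,m+1})². -/
/-!
Write `p n m = u (n+1) m - u n (m+1)` (`antidiagDiff`), so that the equation reads
`u (n+1) (m+1) - u n m = 1 / p n m`. Splitting the differences in the denominators of `U` at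
an intermediate lattice point expresses them through `p` alone:
`U n m = 1 / (p n m + 1 / p (n-1) m)` and `U n (m+1) = 1 / (p (n-1) m + 1 / p n m)`.
The rational identity `1 / (p + 1/q) + 1 / (q + 1/p) / p² = 1 / p`, applied once with
`q = p (n-1) m` and once with `q = p (n+1) m`, shows that both `U n m + U n (m+1) / p²` and
`U (n+1) (m+1) + U (n+1) m / p²` equal `1 / p n m`, which is the linearized equation.
-/

lemma one_div_add_one_div_add_div_sq {K : Type*} [Field K] {p q : K}
    (hp : p ≠ 0) (hq : q ≠ 0) (hpq : p + 1 / q ≠ 0) :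
    1 / (p + 1 / q) + 1 / (q + 1 / p) / p ^ 2 = 1 / p := by
  have hpq' : p * q + 1 ≠ 0 := by
    contrapose! hpq
    field_simp
    linear_combination hpq
  field_simp

namespace DiscreteKdV

noncomputable def antidiagDiff (u : ℤ → ℤ → ℝ) (n m : ℤ) : ℝ := u (n + 1) m - u n (m + 1)

noncomputable def symmetry (u : ℤ → ℤ → ℝ) (n m : ℤ) : ℝ := 1 / (u (n + 1) m - u (n - 1) m)

variable {u : ℤ → ℤ → ℝ} (heq : ∀ n m, u (n + 1) (m + 1) = u n m + 1 / antidiagDiff u n m)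
include heq

lemma sub_eq_antidiagDiff_add (n m : ℤ) :
    u (n + 1) m - u (n - 1) m = antidiagDiff u n m + 1 / antidiagDiff u (n - 1) m := by
  have h := heq (n - 1) m
  rw [sub_add_cancel] at h
  rw [antidiagDiff, h]
  ring

lemma sub_succ_eq_antidiagDiff_add (n m : ℤ) :
    u (n + 1) (m + 1) - u (n - 1) (m + 1) = antidiagDiff u (n - 1) m + 1 / antidiagDiff u n m := by
  rw [heq n m]
  simp only [antidiagDiff, sub_add_cancel]
  ring

lemma symmetry_add_symmetry_succ_div_sq (hden : ∀ n m, antidiagDiff u n m ≠ 0)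
    (hsym : ∀ n m, u (n + 1) m ≠ u (n - 1) m) (n m : ℤ) :
    symmetry u n m + symmetry u n (m + 1) / antidiagDiff u n m ^ 2 = 1 / antidiagDiff u n m := by
  have hne := sub_ne_zero.mpr (hsym n m)
  rw [sub_eq_antidiagDiff_add heq] at hne
  rw [symmetry, symmetry, sub_eq_antidiagDiff_add heq, sub_succ_eq_antidiagDiff_add heq]
  exact one_div_add_one_div_add_div_sq (hden n m) (hden (n - 1) m) hne

lemma symmetry_succ_succ_add_symmetry_succ_div_sq (hden : ∀ n m, antidiagDiff u n m ≠ 0)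
    (hsym : ∀ n m, u (n + 1) m ≠ u (n - 1) m) (n m : ℤ) :
    symmetry u (n + 1) (m + 1) + symmetry u (n + 1) m / antidiagDiff u n m ^ 2
      = 1 / antidiagDiff u n m := by
  have hdiag := sub_succ_eq_antidiagDiff_add heq (n + 1) m
  have hne := sub_ne_zero.mpr (hsym (n + 1) (m + 1))
  rw [hdiag, add_sub_cancel_right] at hne
  rw [symmetry, symmetry, hdiag, sub_eq_antidiagDiff_add heq, add_sub_cancel_right]
  exact one_div_add_one_div_add_div_sq (hden n m) (hden (n + 1) m) hne

end DiscreteKdV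

/-- For a solution `u` of the discrete KdV equation
`u_{n+1,m+1} = u_{n,m} + 1/(u_{n+1,m} − u_{n,m+1})`, the function
`U_{n,m} = 1/(u_{n+1,m} − u_{n−1,m})` solves the linearized equation
`U_{n+1,m+1} = U_{n,m} − (U_{n+1,m} − U_{n,m+1})/(u_{n+1,m} − u_{n,m+1})²`. -/
theorem discrete_KdV_symmetry_solves_linearization
    (u : ℤ → ℤ → ℝ)
    (hden : ∀ n m, u (n + 1) m ≠ u n (m + 1))
    (hden2 : ∀ n m, u (n + 1) m ≠ u (n - 1) m)
    (heq : ∀ n m, u (n + 1) (m + 1) = u n m + 1 / (u (n + 1) m - u n (m + 1))) :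
    ∀ n m : ℤ,
      (fun n m => 1 / (u (n + 1) m - u (n - 1) m)) (n + 1) (m + 1)
        = (fun n m => 1 / (u (n + 1) m - u (n - 1) m)) n m
          - ((fun n m => 1 / (u (n + 1) m - u (n - 1) m)) (n + 1) m
              - (fun n m => 1 / (u (n + 1) m - u (n - 1) m)) n (m + 1))
            / (u (n + 1) m - u n (m + 1)) ^ 2 := by
  intro n m
  have hden' : ∀ n m, DiscreteKdV.antidiagDiff u n m ≠ 0 := fun n m ↦ sub_ne_zero.mpr (hden n m)
  have hlower := DiscreteKdV.symmetry_add_symmetry_succ_div_sq heq hden' hden2 n m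
  have hupper := DiscreteKdV.symmetry_succ_succ_add_symmetry_succ_div_sq heq hden' hden2 n m
  show DiscreteKdV.symmetry u (n + 1) (m + 1) = DiscreteKdV.symmetry u n m
    - (DiscreteKdV.symmetry u (n + 1) m - DiscreteKdV.symmetry u n (m + 1))
      / DiscreteKdV.antidiagDiff u n m ^ 2
  rw [sub_div]
  linarith
end

section
/- Let u(x,y) be a smooth complex-valued (or real-valued) function satisfying u_{xy} = sqrt(1 + u_x²) sin(u), and define v = u + i·arcsinh(u_x) where arcsinh(t) = log(t + sqrt(1+t²)). Then v satisfies the sine-Gordon equation v_{xy} = sin(v). -/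
noncomputable def pdx (f : ℝ → ℝ → ℝ) : ℝ → ℝ → ℝ := fun x y => deriv (fun s => f s y) x

noncomputable def pdy (f : ℝ → ℝ → ℝ) : ℝ → ℝ → ℝ := fun x y => deriv (fun t => f x t) y

noncomputable def cpdx (f : ℝ → ℝ → ℂ) : ℝ → ℝ → ℂ := fun x y => deriv (fun s => f s y) x

noncomputable def cpdy (f : ℝ → ℝ → ℂ) : ℝ → ℝ → ℂ := fun x y => deriv (fun t => f x t) y

/-- Horizontal curve derivative: for differentiable `G : ℝ×ℝ → ℝ`. -/
theorem hasDerivAt_slice_x {G : ℝ × ℝ → ℝ} (hG : Differentiable ℝ G) (x y : ℝ) :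
    HasDerivAt (fun s => G (s, y)) (fderiv ℝ G (x, y) (1, 0)) x := by
  have h := (hG (x, y)).hasFDerivAt.comp_hasDerivAt x
    ((hasDerivAt_id x).prodMk (hasDerivAt_const x y))
  simpa [Function.comp_def] using h

theorem hasDerivAt_slice_y {G : ℝ × ℝ → ℝ} (hG : Differentiable ℝ G) (x y : ℝ) :
    HasDerivAt (fun t => G (x, t)) (fderiv ℝ G (x, y) (0, 1)) y := by
  have h := (hG (x, y)).hasFDerivAt.comp_hasDerivAt y
    ((hasDerivAt_const y x).prodMk (hasDerivAt_id y))
  simpa [Function.comp_def] using h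

/-- If `u` is a smooth real solution of `u_{xy} = √(1+u_x²) sin u`, then
`v = u + i·arcsinh(u_x)` satisfies the sine-Gordon equation `v_{xy} = sin v`. -/
theorem substitution_to_sine_Gordon
    (u : ℝ → ℝ → ℝ)
    (hu : ContDiff ℝ (⊤ : ℕ∞) (fun p : ℝ × ℝ => u p.1 p.2))
    (heq : ∀ x y, pdy (pdx u) x y = Real.sqrt (1 + (pdx u x y) ^ 2) * Real.sin (u x y)) :
    ∀ x y,
      cpdy (cpdx (fun a b => (u a b : ℂ) + Complex.I * (Real.arsinh (pdx u a b) : ℂ))) x y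
        = Complex.sin ((u x y : ℂ) + Complex.I * (Real.arsinh (pdx u x y) : ℂ)) := by
  intro x y
  set F : ℝ × ℝ → ℝ := fun p => u p.1 p.2 with hF
  -- W = ∂x u as a function of the pair
  set W : ℝ × ℝ → ℝ := fun p => fderiv ℝ F p (1, 0) with hW
  have hWsm : ContDiff ℝ (⊤ : ℕ∞) W := by
    exact ((hu.fderiv_right (by simp)).clm_apply contDiff_const)
  have hFd : Differentiable ℝ F := hu.differentiable (by simp)
  have hpdx : ∀ a b, pdx u a b = W (a, b) := fun a b =>
    (hasDerivAt_slice_x hFd a b).deriv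
  -- g = arsinh(u_x)
  set g : ℝ × ℝ → ℝ := fun p => Real.arsinh (W p) with hg
  have hgsm : ContDiff ℝ (⊤:ℕ∞) g := (hWsm.of_le (by simp)).arsinh
  have hgd : Differentiable ℝ g := hgsm.differentiable (by simp)
  have hWd : Differentiable ℝ W := hWsm.differentiable (by simp)
  -- pdy (pdx u) a b = fderiv W (a,b) (0,1)
  have hWy : ∀ a b, pdy (pdx u) a b = fderiv ℝ W (a, b) (0, 1) := by
    intro a b
    have : (fun t => pdx u a t) = fun t => W (a, t) := funext fun t => hpdx a t
    rw [pdy, this]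
    exact (hasDerivAt_slice_y hWd a b).deriv
  -- pdx g (as two-var) = fderiv g (a,b) (1,0)
  set g2 : ℝ → ℝ → ℝ := fun a b => Real.arsinh (pdx u a b) with hg2
  have hg2g : ∀ a b, g2 a b = g (a, b) := fun a b => by rw [hg2]; simp [hg, hpdx]
  have hpdxg : ∀ a b, pdx g2 a b = fderiv ℝ g (a, b) (1, 0) := by
    intro a b
    have : (fun s => g2 s b) = fun s => g (s, b) := funext fun s => hg2g s b
    rw [pdx, this]
    exact (hasDerivAt_slice_x hgd a b).deriv
  -- pdy g2 a b = sin (u a b)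
  have hsqrt_pos : ∀ a b, 0 < Real.sqrt (1 + (pdx u a b) ^ 2) := by
    intro a b
    apply Real.sqrt_pos.2
    positivity
  have hpdyg : ∀ a b, pdy g2 a b = Real.sin (u a b) := by
    intro a b
    have hcurve : HasDerivAt (fun t => W (a, t)) (fderiv ℝ W (a, b) (0, 1)) b :=
      hasDerivAt_slice_y hWd a b
    have harsinh : HasDerivAt (fun t => Real.arsinh (W (a, t)))
        ((Real.sqrt (1 + (W (a, b)) ^ 2))⁻¹ * fderiv ℝ W (a, b) (0, 1)) b :=
      by have := (Real.hasDerivAt_arsinh (W (a, b))).comp b hcurve; exact this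
    have : (fun t => g2 a t) = fun t => Real.arsinh (W (a, t)) := by
      funext t; rw [hg2]; simp [hpdx]
    rw [pdy, this, harsinh.deriv, ← hWy a b, heq a b, hpdx]
    rw [← hpdx a b]
    field_simp [(hsqrt_pos a b).ne']
  -- pdx (pdy g2) a b = cos(u) * u_x
  have hpdxpdyg : ∀ a b, pdx (pdy g2) a b = Real.cos (u a b) * W (a, b) := by
    intro a b
    have : (fun s => pdy g2 s b) = fun s => Real.sin (u s b) :=
      funext fun s => hpdyg s b
    rw [pdx, this]
    have hus : HasDerivAt (fun s => u s b) (W (a, b)) a := by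
      have := hasDerivAt_slice_x hFd a b
      simpa [hF] using this
    exact ((Real.hasDerivAt_sin (u a b)).comp a hus).deriv
  -- Schwarz symmetry for g
  have hsym : ∀ a b, pdy (pdx g2) a b = pdx (pdy g2) a b := by
    intro a b
    -- G1 p = fderiv g p (1,0) ; pdy (pdx g2) a b = fderiv G1 (a,b) (0,1)
    set G1 : ℝ × ℝ → ℝ := fun p => fderiv ℝ g p (1, 0) with hG1
    have hG1sm : ContDiff ℝ (⊤:ℕ∞) G1 := (hgsm.fderiv_right (by simp)).clm_apply contDiff_const
    have hG1d : Differentiable ℝ G1 := hG1sm.differentiable (by simp)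
    have e1 : pdy (pdx g2) a b = fderiv ℝ G1 (a, b) (0, 1) := by
      have : (fun t => pdx g2 a t) = fun t => G1 (a, t) := funext fun t => hpdxg a t
      rw [pdy, this]
      exact (hasDerivAt_slice_y hG1d a b).deriv
    -- likewise for the other order
    set G2 : ℝ × ℝ → ℝ := fun p => fderiv ℝ g p (0, 1) with hG2
    have hG2sm : ContDiff ℝ (⊤:ℕ∞) G2 := (hgsm.fderiv_right (by simp)).clm_apply contDiff_const
    have hG2d : Differentiable ℝ G2 := hG2sm.differentiable (by simp)
    have hpdyg2 : ∀ a b, pdy g2 a b = G2 (a, b) := by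
      intro a b
      have : (fun t => g2 a t) = fun t => g (a, t) := funext fun t => hg2g a t
      rw [pdy, this]
      exact (hasDerivAt_slice_y hgd a b).deriv
    have e2 : pdx (pdy g2) a b = fderiv ℝ G2 (a, b) (1, 0) := by
      have : (fun s => pdy g2 s b) = fun s => G2 (s, b) := funext fun s => hpdyg2 s b
      rw [pdx, this]
      exact (hasDerivAt_slice_x hG2d a b).deriv
    rw [e1, e2]
    -- fderiv G1 (a,b) (0,1) = (fderiv (fderiv g) (a,b) (0,1)) (1,0) and symmetrize
    have hfd' : ContDiff ℝ (⊤:ℕ∞) (fderiv ℝ g) := hgsm.fderiv_right (by simp)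
    have hfd : Differentiable ℝ (fderiv ℝ g) := hfd'.differentiable (by simp)
    have hcomp1 : fderiv ℝ G1 (a, b) = (ContinuousLinearMap.apply ℝ ℝ ((1:ℝ), (0:ℝ))).comp
        (fderiv ℝ (fderiv ℝ g) (a, b)) := by
      have : G1 = (ContinuousLinearMap.apply ℝ ℝ ((1:ℝ), (0:ℝ))) ∘ (fderiv ℝ g) := rfl
      rw [this, fderiv_comp _ (ContinuousLinearMap.apply ℝ ℝ ((1:ℝ),(0:ℝ))).differentiableAt
        (hfd (a, b))]
      simp
    have hcomp2 : fderiv ℝ G2 (a, b) = (ContinuousLinearMap.apply ℝ ℝ ((0:ℝ), (1:ℝ))).comp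
        (fderiv ℝ (fderiv ℝ g) (a, b)) := by
      have : G2 = (ContinuousLinearMap.apply ℝ ℝ ((0:ℝ), (1:ℝ))) ∘ (fderiv ℝ g) := rfl
      rw [this, fderiv_comp _ (ContinuousLinearMap.apply ℝ ℝ ((0:ℝ),(1:ℝ))).differentiableAt
        (hfd (a, b))]
      simp
    rw [hcomp1, hcomp2]
    simp only [ContinuousLinearMap.coe_comp', Function.comp_apply,
      ContinuousLinearMap.apply_apply]
    exact second_derivative_symmetric (fun p => (hgd p).hasFDerivAt)
      (hfd (a, b)).hasFDerivAt ((0:ℝ), (1:ℝ)) ((1:ℝ), (0:ℝ))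
  -- Complex part
  set v : ℝ → ℝ → ℂ := fun a b => (u a b : ℂ) + Complex.I * (Real.arsinh (pdx u a b) : ℂ)
    with hv
  -- cpdx v a b = (pdx u a b : ℂ) + I * (pdx g2 a b : ℂ)
  have hcx : ∀ a b, cpdx v a b = (pdx u a b : ℂ) + Complex.I * (pdx g2 a b : ℂ) := by
    intro a b
    have hus : HasDerivAt (fun s => u s b) (W (a, b)) a := hasDerivAt_slice_x hFd a b
    have hgs : HasDerivAt (fun s => g2 s b) (fderiv ℝ g (a, b) (1, 0)) a := by
      have : (fun s => g2 s b) = fun s => g (s, b) := funext fun s => hg2g s b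
      rw [this]; exact hasDerivAt_slice_x hgd a b
    have h1 : HasDerivAt (fun s => ((u s b : ℝ) : ℂ)) ((W (a, b) : ℝ) : ℂ) a :=
      Complex.ofRealCLM.hasFDerivAt.comp_hasDerivAt a hus
    have h2 : HasDerivAt (fun s => Complex.I * ((g2 s b : ℝ) : ℂ))
        (Complex.I * ((fderiv ℝ g (a, b) (1, 0) : ℝ) : ℂ)) a :=
      (Complex.ofRealCLM.hasFDerivAt.comp_hasDerivAt a hgs).const_mul Complex.I
    have := (h1.fun_add h2).deriv
    rw [cpdx]
    simp only [hv, hg2] at this ⊢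
    rw [this, hpdx, hpdxg a b]
  -- cpdy (cpdx v) x y
  have hWyd : HasDerivAt (fun t => W (x, t)) (fderiv ℝ W (x, y) (0, 1)) y :=
    hasDerivAt_slice_y hWd x y
  set G1 : ℝ × ℝ → ℝ := fun p => fderiv ℝ g p (1, 0) with hG1
  have hG1sm : ContDiff ℝ (⊤:ℕ∞) G1 := (hgsm.fderiv_right (by simp)).clm_apply contDiff_const
  have hG1d : Differentiable ℝ G1 := hG1sm.differentiable (by simp)
  have hG1y : HasDerivAt (fun t => G1 (x, t)) (fderiv ℝ G1 (x, y) (0, 1)) y :=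
    hasDerivAt_slice_y hG1d x y
  have key : cpdy (cpdx v) x y
      = ((pdy (pdx u) x y : ℝ) : ℂ) + Complex.I * ((pdy (pdx g2) x y : ℝ) : ℂ) := by
    have hfun : (fun t => cpdx v x t)
        = fun t => ((W (x, t) : ℝ) : ℂ) + Complex.I * ((G1 (x, t) : ℝ) : ℂ) := by
      funext t
      rw [hcx x t, hpdx, hpdxg x t]
    have h1 : HasDerivAt (fun t => ((W (x, t) : ℝ) : ℂ))
        ((fderiv ℝ W (x, y) (0, 1) : ℝ) : ℂ) y :=
      Complex.ofRealCLM.hasFDerivAt.comp_hasDerivAt y hWyd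
    have h2 : HasDerivAt (fun t => Complex.I * ((G1 (x, t) : ℝ) : ℂ))
        (Complex.I * ((fderiv ℝ G1 (x, y) (0, 1) : ℝ) : ℂ)) y :=
      (Complex.ofRealCLM.hasFDerivAt.comp_hasDerivAt y hG1y).const_mul Complex.I
    have hd := (h1.fun_add h2).deriv
    rw [cpdy, hfun, hd, hWy x y]
    congr 2
    -- pdy (pdx g2) x y = fderiv G1 (x,y) (0,1)
    have he : (fun t => pdx g2 x t) = fun t => G1 (x, t) := funext fun t => hpdxg x t
    rw [pdy, he]
    exact_mod_cast (hG1y.deriv).symm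
  rw [key, heq x y, hsym x y, hpdxpdyg x y]
  -- final algebra
  set w : ℝ := pdx u x y with hw
  have hWxy : W (x, y) = w := (hpdx x y).symm
  rw [hWxy]
  rw [Complex.sin_add]
  have hIc : Complex.I * ((Real.arsinh w : ℝ) : ℂ) = ((Real.arsinh w : ℝ) : ℂ) * Complex.I :=
    mul_comm _ _
  rw [hIc, Complex.sin_mul_I, Complex.cos_mul_I]
  rw [← Complex.ofReal_sinh, ← Complex.ofReal_cosh, Real.sinh_arsinh, Real.cosh_arsinh]
  push_cast
  ring
end

section
/- Let λ ∈ ℂ, λ ≠ 0, and let u(x,y) be a smooth function. Define the 2×2 matrix-valued functions P = (1/(2λ)) [[√(1+u_x²) cos u − i u_x sin u, √(1+u_x²) sin u + i u_x cos u], [√(1+u_x²) sin u + i u_x cos u, −√(1+u_x²) cos u + i u_x sin u]] and Q = (1/2) [[λ, −u_y − i sin u], [u_y + i sin u, −λ]]. Then the zero-curvature condition P_y − Q_x + [P, Q]·(appropriate sign) = 0 (i.e., ∂_y P − ∂_x Q + P Q − Q P = 0) holds if and only if u satisfies u_{xy} = √(1+u_x²) sin u. -/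
/-- Entrywise partial derivative in `x` of a matrix-valued function. -/
noncomputable def matDx (M : ℝ → ℝ → Matrix (Fin 2) (Fin 2) ℂ) :
    ℝ → ℝ → Matrix (Fin 2) (Fin 2) ℂ :=
  fun x y => Matrix.of fun i j => deriv (fun s => M s y i j) x

/-- Entrywise partial derivative in `y` of a matrix-valued function. -/
noncomputable def matDy (M : ℝ → ℝ → Matrix (Fin 2) (Fin 2) ℂ) :
    ℝ → ℝ → Matrix (Fin 2) (Fin 2) ℂ :=
  fun x y => Matrix.of fun i j => deriv (fun t => M x t i j) y

section aux
variable {u : ℝ → ℝ → ℝ}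

lemma myPdx_eq (hu : ContDiff ℝ (⊤ : ℕ∞) (fun p : ℝ × ℝ => u p.1 p.2)) (x y : ℝ) :
    pdx u x y = fderiv ℝ (fun p : ℝ × ℝ => u p.1 p.2) (x, y) (1, 0) := by
  have hline : HasDerivAt (fun s : ℝ => (s, y)) ((1 : ℝ), (0 : ℝ)) x :=
    (hasDerivAt_id x).prodMk (hasDerivAt_const x y)
  exact (((hu.differentiable (by simp)) (x, y)).hasFDerivAt.comp_hasDerivAt x hline).deriv

lemma myPdy_eq (hu : ContDiff ℝ (⊤ : ℕ∞) (fun p : ℝ × ℝ => u p.1 p.2)) (x y : ℝ) :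
    pdy u x y = fderiv ℝ (fun p : ℝ × ℝ => u p.1 p.2) (x, y) (0, 1) := by
  have hline : HasDerivAt (fun t : ℝ => (x, t)) ((0 : ℝ), (1 : ℝ)) y :=
    (hasDerivAt_const y x).prodMk (hasDerivAt_id y)
  exact (((hu.differentiable (by simp)) (x, y)).hasFDerivAt.comp_hasDerivAt y hline).deriv

lemma myContDiff_pdx (hu : ContDiff ℝ (⊤ : ℕ∞) (fun p : ℝ × ℝ => u p.1 p.2)) :
    ContDiff ℝ (⊤ : ℕ∞) (fun p : ℝ × ℝ => pdx u p.1 p.2) := by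
  have : (fun p : ℝ × ℝ => pdx u p.1 p.2)
      = fun p : ℝ × ℝ => fderiv ℝ (fun p : ℝ × ℝ => u p.1 p.2) p ((1 : ℝ), (0 : ℝ)) := by
    funext p; exact myPdx_eq hu p.1 p.2
  rw [this]
  exact (hu.fderiv_right (by simp)).clm_apply contDiff_const

lemma myContDiff_pdy (hu : ContDiff ℝ (⊤ : ℕ∞) (fun p : ℝ × ℝ => u p.1 p.2)) :
    ContDiff ℝ (⊤ : ℕ∞) (fun p : ℝ × ℝ => pdy u p.1 p.2) := by
  have : (fun p : ℝ × ℝ => pdy u p.1 p.2)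
      = fun p : ℝ × ℝ => fderiv ℝ (fun p : ℝ × ℝ => u p.1 p.2) p ((0 : ℝ), (1 : ℝ)) := by
    funext p; exact myPdy_eq hu p.1 p.2
  rw [this]
  exact (hu.fderiv_right (by simp)).clm_apply contDiff_const

lemma mySlice_y (hu : ContDiff ℝ (⊤ : ℕ∞) (fun p : ℝ × ℝ => u p.1 p.2)) (x y : ℝ) :
    HasDerivAt (fun t => u x t) (pdy u x y) y := by
  have hline : HasDerivAt (fun t : ℝ => (x, t)) ((0 : ℝ), (1 : ℝ)) y :=
    (hasDerivAt_const y x).prodMk (hasDerivAt_id y)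
  rw [myPdy_eq hu x y]
  exact ((hu.differentiable (by simp)) (x, y)).hasFDerivAt.comp_hasDerivAt y hline

lemma mySlice_x (hu : ContDiff ℝ (⊤ : ℕ∞) (fun p : ℝ × ℝ => u p.1 p.2)) (x y : ℝ) :
    HasDerivAt (fun s => u s y) (pdx u x y) x := by
  have hline : HasDerivAt (fun s : ℝ => (s, y)) ((1 : ℝ), (0 : ℝ)) x :=
    (hasDerivAt_id x).prodMk (hasDerivAt_const x y)
  rw [myPdx_eq hu x y]
  exact ((hu.differentiable (by simp)) (x, y)).hasFDerivAt.comp_hasDerivAt x hline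

lemma myClairaut (hu : ContDiff ℝ (⊤ : ℕ∞) (fun p : ℝ × ℝ => u p.1 p.2)) (x y : ℝ) :
    pdx (pdy u) x y = pdy (pdx u) x y := by
  set f := fun p : ℝ × ℝ => u p.1 p.2 with hf
  have hf1 : ContDiff ℝ (⊤ : ℕ∞) (fderiv ℝ f) := hu.fderiv_right (by simp)
  have hdf : Differentiable ℝ (fderiv ℝ f) := hf1.differentiable (by simp)
  set f'' := fderiv ℝ (fderiv ℝ f) (x, y) with hf''
  have hsymm : ∀ v w : ℝ × ℝ, f'' v w = f'' w v := fun v w =>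
    second_derivative_symmetric (fun p => ((hu.differentiable (by simp)) p).hasFDerivAt)
      ((hdf (x, y)).hasFDerivAt) v w
  have hx : pdx (pdy u) x y = f'' (1, 0) (0, 1) := by
    have heq : (fun s : ℝ => pdy u s y) = fun s : ℝ => fderiv ℝ f (s, y) (0, 1) := by
      funext s; exact myPdy_eq hu s y
    have hline : HasDerivAt (fun s : ℝ => (s, y)) ((1 : ℝ), (0 : ℝ)) x :=
      (hasDerivAt_id x).prodMk (hasDerivAt_const x y)
    have h1 : HasDerivAt (fun s : ℝ => fderiv ℝ f (s, y)) (f'' (1, 0)) x :=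
      (hdf (x, y)).hasFDerivAt.comp_hasDerivAt x hline
    have h2 : HasDerivAt (fun s : ℝ => fderiv ℝ f (s, y) (0, 1)) (f'' (1, 0) (0, 1)) x :=
      (ContinuousLinearMap.apply ℝ ℝ ((0 : ℝ), (1 : ℝ))).hasFDerivAt.comp_hasDerivAt x h1
    show deriv (fun s : ℝ => pdy u s y) x = _
    rw [heq]; exact h2.deriv
  have hy : pdy (pdx u) x y = f'' (0, 1) (1, 0) := by
    have heq : (fun t : ℝ => pdx u x t) = fun t : ℝ => fderiv ℝ f (x, t) (1, 0) := by
      funext t; exact myPdx_eq hu x t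
    have hline : HasDerivAt (fun t : ℝ => (x, t)) ((0 : ℝ), (1 : ℝ)) y :=
      (hasDerivAt_const y x).prodMk (hasDerivAt_id y)
    have h1 : HasDerivAt (fun t : ℝ => fderiv ℝ f (x, t)) (f'' (0, 1)) y :=
      (hdf (x, y)).hasFDerivAt.comp_hasDerivAt y hline
    have h2 : HasDerivAt (fun t : ℝ => fderiv ℝ f (x, t) (1, 0)) (f'' (0, 1) (1, 0)) y :=
      (ContinuousLinearMap.apply ℝ ℝ ((1 : ℝ), (0 : ℝ))).hasFDerivAt.comp_hasDerivAt y h1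
    show deriv (fun t : ℝ => pdx u x t) y = _
    rw [heq]; exact h2.deriv
  rw [hx, hy, hsymm]

end aux


set_option maxHeartbeats 3000000 in
/-- The zero-curvature condition `∂_y P − ∂_x Q + [P,Q] = 0` for the Lax pair obtained from
the sine-Gordon Lax pair via the substitution `v = u + i·arcsinh(u_x)` holds iff
`u` satisfies `u_{xy} = √(1+u_x²) sin u`. -/
theorem zero_curvature_iff_equation
    (lam : ℂ) (hlam : lam ≠ 0)
    (u : ℝ → ℝ → ℝ)
    (hu : ContDiff ℝ (⊤ : ℕ∞) (fun p : ℝ × ℝ => u p.1 p.2))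
    (P Q : ℝ → ℝ → Matrix (Fin 2) (Fin 2) ℂ)
    (hP : ∀ x y, P x y = (1 / (2 * lam)) •
      !![(Real.sqrt (1 + (pdx u x y) ^ 2) * Real.cos (u x y) : ℝ)
            - Complex.I * (pdx u x y * Real.sin (u x y) : ℝ),
          (Real.sqrt (1 + (pdx u x y) ^ 2) * Real.sin (u x y) : ℝ)
            + Complex.I * (pdx u x y * Real.cos (u x y) : ℝ);
          (Real.sqrt (1 + (pdx u x y) ^ 2) * Real.sin (u x y) : ℝ)
            + Complex.I * (pdx u x y * Real.cos (u x y) : ℝ),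
          -((Real.sqrt (1 + (pdx u x y) ^ 2) * Real.cos (u x y) : ℝ) : ℂ)
            + Complex.I * (pdx u x y * Real.sin (u x y) : ℝ)])
    (hQ : ∀ x y, Q x y = (1 / 2 : ℂ) •
      !![lam, -((pdy u x y : ℝ) : ℂ) - Complex.I * (Real.sin (u x y) : ℝ);
          ((pdy u x y : ℝ) : ℂ) + Complex.I * (Real.sin (u x y) : ℝ), -lam]) :
    (∀ x y, matDy P x y - matDx Q x y + (P x y * Q x y - Q x y * P x y) = 0)
      ↔ (∀ x y, pdy (pdx u) x y = Real.sqrt (1 + (pdx u x y) ^ 2) * Real.sin (u x y)) := by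
  have key : ∀ x y, matDy P x y - matDx Q x y + (P x y * Q x y - Q x y * P x y)
      = ((pdy (pdx u) x y - Real.sqrt (1 + (pdx u x y) ^ 2) * Real.sin (u x y) : ℝ) : ℂ) •
        ((1 / (2 * lam)) •
        !![((pdx u x y * Real.cos (u x y) / Real.sqrt (1 + (pdx u x y) ^ 2) : ℝ) : ℂ)
              - Complex.I * (Real.sin (u x y) : ℝ),
            ((pdx u x y * Real.sin (u x y) / Real.sqrt (1 + (pdx u x y) ^ 2) : ℝ) : ℂ)
              + Complex.I * (Real.cos (u x y) : ℝ) + lam;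
            ((pdx u x y * Real.sin (u x y) / Real.sqrt (1 + (pdx u x y) ^ 2) : ℝ) : ℂ)
              + Complex.I * (Real.cos (u x y) : ℝ) - lam,
            -(((pdx u x y * Real.cos (u x y) / Real.sqrt (1 + (pdx u x y) ^ 2) : ℝ) : ℂ)
              - Complex.I * (Real.sin (u x y) : ℝ))]) := by
    intro x y
    -- abbreviations
    set w : ℝ := pdx u x y with hw
    set q : ℝ := pdy u x y with hq
    set wy : ℝ := pdy (pdx u) x y with hwy
    set c : ℝ := Real.cos (u x y) with hc
    set sn : ℝ := Real.sin (u x y) with hsn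
    have hpos : (0 : ℝ) < 1 + w ^ 2 := by positivity
    set s : ℝ := Real.sqrt (1 + w ^ 2) with hs
    have hsne : s ≠ 0 := by
      rw [hs]; exact (Real.sqrt_pos.2 hpos).ne'
    -- basic HasDerivAt facts in t-direction
    have hU : HasDerivAt (fun t => u x t) q y := mySlice_y hu x y
    have hW : HasDerivAt (fun t => pdx u x t) wy y := mySlice_y (myContDiff_pdx hu) x y
    have hC : HasDerivAt (fun t => Real.cos (u x t)) (-sn * q) y := hU.cos
    have hSin : HasDerivAt (fun t => Real.sin (u x t)) (c * q) y := hU.sin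
    have hS : HasDerivAt (fun t => Real.sqrt (1 + pdx u x t ^ 2)) (w * wy / s) y := by
      have h1 : HasDerivAt (fun t => 1 + pdx u x t ^ 2) (2 * w ^ 1 * wy) y :=
        (hW.pow 2).const_add 1
      have h2 := (Real.hasDerivAt_sqrt hpos.ne').comp y h1
      refine h2.congr_deriv ?_
      rw [← hs]
      field_simp
    have hA1 : HasDerivAt (fun t => Real.sqrt (1 + pdx u x t ^ 2) * Real.cos (u x t))
        (w * wy / s * c + s * (-sn * q)) y := hS.mul hC
    have hA2 : HasDerivAt (fun t => pdx u x t * Real.sin (u x t))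
        (wy * sn + w * (c * q)) y := hW.mul hSin
    have hB1 : HasDerivAt (fun t => Real.sqrt (1 + pdx u x t ^ 2) * Real.sin (u x t))
        (w * wy / s * sn + s * (c * q)) y := hS.mul hSin
    have hB2 : HasDerivAt (fun t => pdx u x t * Real.cos (u x t))
        (wy * c + w * (-sn * q)) y := hW.mul hC
    -- x-direction facts for Q
    have hUx : HasDerivAt (fun s' => u s' y) w x := mySlice_x hu x y
    have hVx : HasDerivAt (fun s' => pdy u s' y) wy x := by
      have := mySlice_x (myContDiff_pdy hu) x y
      rwa [myClairaut hu x y, ← hwy] at this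
    have hSinx : HasDerivAt (fun s' => Real.sin (u s' y)) (c * w) x := hUx.sin
    -- derivatives of P entries
    have eP00 : (fun t => P x t 0 0) = fun t => (1 / (2 * lam)) *
        (((Real.sqrt (1 + pdx u x t ^ 2) * Real.cos (u x t) : ℝ) : ℂ)
          - Complex.I * ((pdx u x t * Real.sin (u x t) : ℝ) : ℂ)) := by
      funext t; rw [hP x t]; simp [Matrix.smul_apply, smul_eq_mul]
    have eP01 : (fun t => P x t 0 1) = fun t => (1 / (2 * lam)) *
        (((Real.sqrt (1 + pdx u x t ^ 2) * Real.sin (u x t) : ℝ) : ℂ)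
          + Complex.I * ((pdx u x t * Real.cos (u x t) : ℝ) : ℂ)) := by
      funext t; rw [hP x t]; simp [Matrix.smul_apply, smul_eq_mul]
    have eP10 : (fun t => P x t 1 0) = fun t => (1 / (2 * lam)) *
        (((Real.sqrt (1 + pdx u x t ^ 2) * Real.sin (u x t) : ℝ) : ℂ)
          + Complex.I * ((pdx u x t * Real.cos (u x t) : ℝ) : ℂ)) := by
      funext t; rw [hP x t]; simp [Matrix.smul_apply, smul_eq_mul]
    have eP11 : (fun t => P x t 1 1) = fun t => (1 / (2 * lam)) *
        (-((Real.sqrt (1 + pdx u x t ^ 2) * Real.cos (u x t) : ℝ) : ℂ)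
          + Complex.I * ((pdx u x t * Real.sin (u x t) : ℝ) : ℂ)) := by
      funext t; rw [hP x t]; simp [Matrix.smul_apply, smul_eq_mul]
    have hdP00 : HasDerivAt (fun t => P x t 0 0)
        ((1 / (2 * lam)) * (((w * wy / s * c + s * (-sn * q) : ℝ) : ℂ)
          - Complex.I * ((wy * sn + w * (c * q) : ℝ) : ℂ))) y := by
      rw [eP00]
      exact ((hA1.ofReal_comp).sub ((hA2.ofReal_comp).const_mul Complex.I)).const_mul _
    have hdP01 : HasDerivAt (fun t => P x t 0 1)
        ((1 / (2 * lam)) * (((w * wy / s * sn + s * (c * q) : ℝ) : ℂ)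
          + Complex.I * ((wy * c + w * (-sn * q) : ℝ) : ℂ))) y := by
      rw [eP01]
      exact ((hB1.ofReal_comp).add ((hB2.ofReal_comp).const_mul Complex.I)).const_mul _
    have hdP10 : HasDerivAt (fun t => P x t 1 0)
        ((1 / (2 * lam)) * (((w * wy / s * sn + s * (c * q) : ℝ) : ℂ)
          + Complex.I * ((wy * c + w * (-sn * q) : ℝ) : ℂ))) y := by
      rw [eP10]
      exact ((hB1.ofReal_comp).add ((hB2.ofReal_comp).const_mul Complex.I)).const_mul _
    have hdP11 : HasDerivAt (fun t => P x t 1 1)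
        ((1 / (2 * lam)) * (-((w * wy / s * c + s * (-sn * q) : ℝ) : ℂ)
          + Complex.I * ((wy * sn + w * (c * q) : ℝ) : ℂ))) y := by
      rw [eP11]
      exact (((hA1.ofReal_comp).neg).add ((hA2.ofReal_comp).const_mul Complex.I)).const_mul _
    -- derivatives of Q entries
    have eQ00 : (fun s' => Q s' y 0 0) = fun _ => (1 / 2 : ℂ) * lam := by
      funext s'; rw [hQ s' y]; simp [Matrix.smul_apply, smul_eq_mul]
    have eQ01 : (fun s' => Q s' y 0 1) = fun s' => (1 / 2 : ℂ) *
        (-((pdy u s' y : ℝ) : ℂ) - Complex.I * ((Real.sin (u s' y) : ℝ) : ℂ)) := by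
      funext s'; rw [hQ s' y]; simp [Matrix.smul_apply, smul_eq_mul]
    have eQ10 : (fun s' => Q s' y 1 0) = fun s' => (1 / 2 : ℂ) *
        (((pdy u s' y : ℝ) : ℂ) + Complex.I * ((Real.sin (u s' y) : ℝ) : ℂ)) := by
      funext s'; rw [hQ s' y]; simp [Matrix.smul_apply, smul_eq_mul]
    have eQ11 : (fun s' => Q s' y 1 1) = fun _ => (1 / 2 : ℂ) * (-lam) := by
      funext s'; rw [hQ s' y]; simp [Matrix.smul_apply, smul_eq_mul]
    have hdQ00 : deriv (fun s' => Q s' y 0 0) x = 0 := by rw [eQ00]; exact deriv_const _ _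
    have hdQ11 : deriv (fun s' => Q s' y 1 1) x = 0 := by rw [eQ11]; exact deriv_const _ _
    have hdQ01 : HasDerivAt (fun s' => Q s' y 0 1)
        ((1 / 2 : ℂ) * (-((wy : ℝ) : ℂ) - Complex.I * ((c * w : ℝ) : ℂ))) x := by
      rw [eQ01]
      exact (((hVx.ofReal_comp).neg).sub ((hSinx.ofReal_comp).const_mul Complex.I)).const_mul _
    have hdQ10 : HasDerivAt (fun s' => Q s' y 1 0)
        ((1 / 2 : ℂ) * (((wy : ℝ) : ℂ) + Complex.I * ((c * w : ℝ) : ℂ))) x := by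
      rw [eQ10]
      exact ((hVx.ofReal_comp).add ((hSinx.ofReal_comp).const_mul Complex.I)).const_mul _
    -- now the matrix identity, entrywise
    ext i j
    fin_cases i <;> fin_cases j
    · show (matDy P x y - matDx Q x y + (P x y * Q x y - Q x y * P x y)) 0 0 = _
      simp only [Matrix.sub_apply, Matrix.add_apply, matDy, matDx, Matrix.of_apply,
        Matrix.mul_apply, Fin.sum_univ_two]
      rw [hdP00.deriv, hdQ00, hP x y, hQ x y]
      simp only [Matrix.smul_apply, smul_eq_mul, Matrix.cons_val', Matrix.cons_val_zero,
        Matrix.cons_val_one, Matrix.head_cons, Matrix.empty_val', Matrix.cons_val_fin_one,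
        Matrix.head_fin_const, Matrix.of_apply]
      simp only [← hw, ← hq, ← hc, ← hsn]
      simp only [← hs]
      have hsC : (s : ℂ) ≠ 0 := Complex.ofReal_ne_zero.2 hsne
      push_cast
      field_simp [hlam, hsC]
      ring_nf
      simp only [Complex.I_sq]
      ring
    · show (matDy P x y - matDx Q x y + (P x y * Q x y - Q x y * P x y)) 0 1 = _
      simp only [Matrix.sub_apply, Matrix.add_apply, matDy, matDx, Matrix.of_apply,
        Matrix.mul_apply, Fin.sum_univ_two]
      rw [hdP01.deriv, hdQ01.deriv, hP x y, hQ x y]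
      simp only [Matrix.smul_apply, smul_eq_mul, Matrix.cons_val', Matrix.cons_val_zero,
        Matrix.cons_val_one, Matrix.head_cons, Matrix.empty_val', Matrix.cons_val_fin_one,
        Matrix.head_fin_const, Matrix.of_apply]
      simp only [← hw, ← hq, ← hc, ← hsn]
      simp only [← hs]
      have hsC : (s : ℂ) ≠ 0 := Complex.ofReal_ne_zero.2 hsne
      push_cast
      field_simp [hlam, hsC]
      ring_nf
      simp only [Complex.I_sq]
      ring
    · show (matDy P x y - matDx Q x y + (P x y * Q x y - Q x y * P x y)) 1 0 = _
      simp only [Matrix.sub_apply, Matrix.add_apply, matDy, matDx, Matrix.of_apply,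
        Matrix.mul_apply, Fin.sum_univ_two]
      rw [hdP10.deriv, hdQ10.deriv, hP x y, hQ x y]
      simp only [Matrix.smul_apply, smul_eq_mul, Matrix.cons_val', Matrix.cons_val_zero,
        Matrix.cons_val_one, Matrix.head_cons, Matrix.empty_val', Matrix.cons_val_fin_one,
        Matrix.head_fin_const, Matrix.of_apply]
      simp only [← hw, ← hq, ← hc, ← hsn]
      simp only [← hs]
      have hsC : (s : ℂ) ≠ 0 := Complex.ofReal_ne_zero.2 hsne
      push_cast
      field_simp [hlam, hsC]
      ring_nf
      simp only [Complex.I_sq]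
      ring
    · show (matDy P x y - matDx Q x y + (P x y * Q x y - Q x y * P x y)) 1 1 = _
      simp only [Matrix.sub_apply, Matrix.add_apply, matDy, matDx, Matrix.of_apply,
        Matrix.mul_apply, Fin.sum_univ_two]
      rw [hdP11.deriv, hdQ11, hP x y, hQ x y]
      simp only [Matrix.smul_apply, smul_eq_mul, Matrix.cons_val', Matrix.cons_val_zero,
        Matrix.cons_val_one, Matrix.head_cons, Matrix.empty_val', Matrix.cons_val_fin_one,
        Matrix.head_fin_const, Matrix.of_apply]
      simp only [← hw, ← hq, ← hc, ← hsn]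
      simp only [← hs]
      have hsC : (s : ℂ) ≠ 0 := Complex.ofReal_ne_zero.2 hsne
      push_cast
      field_simp [hlam, hsC]
      ring_nf
      simp only [Complex.I_sq]
      ring
  constructor
  · intro h x y
    have hk := (key x y).symm.trans (h x y)
    have e01 := congrFun (congrFun hk 0) 1
    have e10 := congrFun (congrFun hk 1) 0
    simp only [Matrix.smul_apply, smul_eq_mul, Matrix.cons_val', Matrix.cons_val_zero,
      Matrix.cons_val_one, Matrix.head_cons, Matrix.empty_val', Matrix.cons_val_fin_one,
      Matrix.head_fin_const, Matrix.of_apply, Matrix.zero_apply] at e01 e10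
    have h3 : ((pdy (pdx u) x y - Real.sqrt (1 + (pdx u x y) ^ 2) * Real.sin (u x y) : ℝ) : ℂ)
        * ((1 / (2 * lam)) * (2 * lam)) = 0 := by linear_combination e01 - e10
    have h4 : (1 / (2 * lam)) * (2 * lam) = 1 := by field_simp
    rw [h4, mul_one] at h3
    have h5 := Complex.ofReal_eq_zero.1 h3
    linarith [h5]
  · intro h x y
    have h0 : (pdy (pdx u) x y - Real.sqrt (1 + (pdx u x y) ^ 2) * Real.sin (u x y) : ℝ) = 0 := by
      rw [h x y]; ring
    rw [key x y, h0]
    simp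
end

section
/- Fix λ with λ + 1 > 0 and c ∈ ℝ. The function F(U, U_x, u, u_x) = (λ cos u / √(1+u_x²)) U_x + sin(u) · F₁(U, U_x, u_x) is the general solution of the first-order linear PDE F·√(1+u_x²)·cos u − F_u·√(1+u_x²)·sin u − λ U_x = 0 in the variable u (for sin u ≠ 0), where F₁ is an arbitrary function not depending on u. Furthermore, F₂(θ) = √((λ+1)θ + c) satisfies 2 F₂(θ) F₂'(θ) = λ + 1 for all θ with (λ+1)θ + c > 0. -/
/-- Solving the determining equation for the nonlinear invariant manifold of
`u_{xy} = √(1+u_x²) sin u`: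
(1) every function of the form `F(u) = (λ cos u/√(1+u_x²)) U_x + sin(u)·F₁` satisfies
`F√(1+u_x²)cos u − F_u√(1+u_x²)sin u − λU_x = 0`;
(2) conversely, on the interval `(0, π)` (where `sin u ≠ 0`) every differentiable solution
is of this form;
(3) `F₂(θ) = √((λ+1)θ + c)` satisfies `2F₂F₂' = λ + 1` wherever `(λ+1)θ + c > 0`. -/
theorem determining_equation_general_solution
    (lam c : ℝ) (hlam : 0 < lam + 1) :
    (∀ F1 Ux ux uu : ℝ,
      ((lam * Real.cos uu / Real.sqrt (1 + ux ^ 2)) * Ux + Real.sin uu * F1)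
          * Real.sqrt (1 + ux ^ 2) * Real.cos uu
        - (deriv (fun v => (lam * Real.cos v / Real.sqrt (1 + ux ^ 2)) * Ux
            + Real.sin v * F1) uu)
          * Real.sqrt (1 + ux ^ 2) * Real.sin uu
        - lam * Ux = 0)
    ∧
    (∀ (Ux ux : ℝ) (G : ℝ → ℝ), Differentiable ℝ G →
      (∀ v ∈ Set.Ioo (0 : ℝ) Real.pi,
        G v * Real.sqrt (1 + ux ^ 2) * Real.cos v
          - deriv G v * Real.sqrt (1 + ux ^ 2) * Real.sin v - lam * Ux = 0) →
      ∃ F1 : ℝ, ∀ v ∈ Set.Ioo (0 : ℝ) Real.pi,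
        G v = (lam * Real.cos v / Real.sqrt (1 + ux ^ 2)) * Ux + Real.sin v * F1)
    ∧
    (∀ θ : ℝ, 0 < (lam + 1) * θ + c →
      2 * Real.sqrt ((lam + 1) * θ + c)
          * deriv (fun t => Real.sqrt ((lam + 1) * t + c)) θ = lam + 1) := by
  refine ⟨?_, ?_, ?_⟩
  · intro F1 Ux ux uu
    set s := Real.sqrt (1 + ux ^ 2) with hs
    have hspos : 0 < s := Real.sqrt_pos.mpr (by positivity)
    have hsne : s ≠ 0 := ne_of_gt hspos
    have hd : HasDerivAt (fun v => (lam * Real.cos v / s) * Ux + Real.sin v * F1)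
        ((lam * (-Real.sin uu) / s) * Ux + Real.cos uu * F1) uu := by
      exact ((((Real.hasDerivAt_cos uu).const_mul lam).div_const s).mul_const Ux).add
        ((Real.hasDerivAt_sin uu).mul_const F1)
    rw [hd.deriv]
    have hpyth : Real.sin uu ^ 2 + Real.cos uu ^ 2 = 1 := Real.sin_sq_add_cos_sq uu
    field_simp
    linear_combination (lam * Ux) * hpyth
  · intro Ux ux G hG hPDE
    set s := Real.sqrt (1 + ux ^ 2) with hs
    have hspos : 0 < s := Real.sqrt_pos.mpr (by positivity)
    have hsne : s ≠ 0 := ne_of_gt hspos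
    set φ : ℝ → ℝ := fun v => (G v - (lam * Real.cos v / s) * Ux) / Real.sin v with hφ
    have hderiv : ∀ v ∈ Set.Ioo (0 : ℝ) Real.pi, HasDerivAt φ 0 v := by
      intro v hv
      have hsin : Real.sin v ≠ 0 := ne_of_gt (Real.sin_pos_of_pos_of_lt_pi hv.1 hv.2)
      have hnum : HasDerivAt (fun v => G v - (lam * Real.cos v / s) * Ux)
          (deriv G v - (lam * (-Real.sin v) / s) * Ux) v :=
        (hG v).hasDerivAt.sub
          ((((Real.hasDerivAt_cos v).const_mul lam).div_const s).mul_const Ux)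
      have hdiv := hnum.div (Real.hasDerivAt_sin v) hsin
      have heq : ((deriv G v - (lam * (-Real.sin v) / s) * Ux) * Real.sin v -
          (G v - (lam * Real.cos v / s) * Ux) * Real.cos v) / Real.sin v ^ 2 = 0 := by
        have h := hPDE v hv
        have key : (deriv G v * Real.sin v - G v * Real.cos v) * s = -(lam * Ux) := by
          linear_combination -h
        rw [div_eq_zero_iff]
        left
        have hpyth := Real.sin_sq_add_cos_sq v
        field_simp
        linear_combination key + (lam * Ux) * hpyth
      rw [heq] at hdiv
      exact hdiv
    have hconv : Convex ℝ (Set.Ioo (0 : ℝ) Real.pi) := convex_Ioo _ _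
    have hint : interior (Set.Ioo (0 : ℝ) Real.pi) = Set.Ioo (0 : ℝ) Real.pi :=
      isOpen_Ioo.interior_eq
    have hcont : ContinuousOn φ (Set.Ioo (0 : ℝ) Real.pi) := fun v hv =>
      ((hderiv v hv).differentiableAt.continuousAt).continuousWithinAt
    have hdiff : DifferentiableOn ℝ φ (interior (Set.Ioo (0 : ℝ) Real.pi)) := by
      rw [hint]; exact fun v hv => ((hderiv v hv).differentiableAt).differentiableWithinAt
    have hmono : MonotoneOn φ (Set.Ioo (0 : ℝ) Real.pi) :=
      monotoneOn_of_deriv_nonneg hconv hcont hdiff (by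
        rw [hint]; intro v hv; rw [(hderiv v hv).deriv])
    have hanti : AntitoneOn φ (Set.Ioo (0 : ℝ) Real.pi) :=
      antitoneOn_of_deriv_nonpos hconv hcont hdiff (by
        rw [hint]; intro v hv; rw [(hderiv v hv).deriv])
    have hmid : (Real.pi / 2) ∈ Set.Ioo (0 : ℝ) Real.pi :=
      ⟨by positivity, by linarith [Real.pi_pos]⟩
    have hconst : ∀ v ∈ Set.Ioo (0 : ℝ) Real.pi, φ v = φ (Real.pi / 2) := by
      intro v hv
      rcases le_total v (Real.pi / 2) with h | h
      · exact le_antisymm (hmono hv hmid h) (hanti hv hmid h)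
      · exact le_antisymm (hanti hmid hv h) (hmono hmid hv h)
    have hmidval : φ (Real.pi / 2) = G (Real.pi / 2) := by
      simp [hφ, Real.cos_pi_div_two, Real.sin_pi_div_two]
    refine ⟨G (Real.pi / 2), fun v hv => ?_⟩
    have hsin : Real.sin v ≠ 0 := ne_of_gt (Real.sin_pos_of_pos_of_lt_pi hv.1 hv.2)
    have h0 := hconst v hv
    rw [hmidval, hφ] at h0
    have h1 : G v - (lam * Real.cos v / s) * Ux = G (Real.pi / 2) * Real.sin v := by
      field_simp at h0
      field_simp
      linear_combination h0
    linarith [h1]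
  · intro θ hθ
    have hne : (lam + 1) * θ + c ≠ 0 := ne_of_gt hθ
    have h1 : HasDerivAt (fun t => (lam + 1) * t + c) (lam + 1) θ := by
      simpa using ((hasDerivAt_id θ).const_mul (lam + 1)).add_const c
    have h2 : HasDerivAt (fun t => Real.sqrt ((lam + 1) * t + c))
        (1 / (2 * Real.sqrt ((lam + 1) * θ + c)) * (lam + 1)) θ :=
      (Real.hasDerivAt_sqrt hne).comp θ h1
    rw [h2.deriv]
    have hsq : Real.sqrt ((lam + 1) * θ + c) ≠ 0 :=
      ne_of_gt (Real.sqrt_pos.mpr hθ)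
    field_simp
end
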